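/- Let p ∈ ℝ[x] with p(0) = p(−1) = 0, and let f = E(p), g = f/(x(x+1)). Then E(p(x)² − p(x−1)p(x+1)) = (x g) ⋄ (x g) − g ⋄ (x² g), where ⋄ is the diamond product f ⋄ h = E(E⁻¹(f)·E⁻¹(h)). -/
import Mathlib

open Polynomial

/-- The polynomial binomial coefficient `C(x,k) = x(x-1)⋯(x-k+1)/k!` in `ℝ[x]`. -/
noncomputable def binomPoly (k : ℕ) : Polynomial ℝ :=
  Polynomial.C ((k.factorial : ℝ)⁻¹) * descPochhammer ℝ k

lemma binomPoly_comp_succ (k : ℕ) :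
    (binomPoly (k+1)).comp (X + 1) = binomPoly (k+1) + binomPoly k := by
  unfold binomPoly
  have h1 : (descPochhammer ℝ (k+1)).comp (X + 1)
      = (X + 1) * descPochhammer ℝ k := by
    rw [descPochhammer_succ_left, mul_comp, X_comp, Polynomial.comp_assoc]
    simp
  have h2 : descPochhammer ℝ (k+1) = descPochhammer ℝ k * (X - (k : Polynomial ℝ)) := by
    simpa using descPochhammer_succ_right ℝ k
  rw [mul_comp, C_comp, h1, h2]
  have hfac : ((k+1).factorial : ℝ) = (k+1) * k.factorial := by
    rw [Nat.factorial_succ]; push_cast; ring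
  have hC : C (((k+1).factorial : ℝ))⁻¹ * (X + 1)
      = C (((k+1).factorial : ℝ))⁻¹ * (X - (k : Polynomial ℝ)) + C ((k.factorial : ℝ))⁻¹ := by
    have hk : (k.factorial : ℝ) ≠ 0 := Nat.cast_ne_zero.2 k.factorial_ne_zero
    have hk1 : ((k+1) : ℝ) ≠ 0 := by positivity
    have : ((k.factorial : ℝ))⁻¹ = (((k+1).factorial : ℝ))⁻¹ * (k+1) := by
      rw [hfac]; field_simp
    rw [this]
    simp only [C_mul, C_add, Polynomial.C_eq_natCast, Polynomial.C_1]
    ring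
  calc C (((k+1).factorial : ℝ))⁻¹ * ((X + 1) * descPochhammer ℝ k)
      = (C (((k+1).factorial : ℝ))⁻¹ * (X + 1)) * descPochhammer ℝ k := by ring
    _ = (C (((k+1).factorial : ℝ))⁻¹ * (X - (k : Polynomial ℝ)) + C ((k.factorial : ℝ))⁻¹)
          * descPochhammer ℝ k := by rw [hC]
    _ = _ := by ring

lemma shift (E : Polynomial ℝ ≃ₗ[ℝ] Polynomial ℝ)
    (hE : ∀ k : ℕ, E (binomPoly k) = Polynomial.X ^ k) (h : Polynomial ℝ) :
    (E.symm (X * h)).comp (X + 1) = E.symm ((X + 1) * h) := by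
  have hE' : ∀ k : ℕ, E.symm (X ^ k) = binomPoly k := fun k => by
    rw [← hE k, LinearEquiv.symm_apply_apply]
  induction h using Polynomial.induction_on' with
  | add q r hq hr =>
    rw [mul_add, mul_add, map_add, map_add, add_comp, hq, hr]
  | monomial n a =>
    rw [← Polynomial.smul_X_eq_monomial]
    rw [mul_smul_comm, mul_smul_comm, map_smul, map_smul, smul_comp]
    congr 1
    have l1 : (X : Polynomial ℝ) * X ^ n = X ^ (n+1) := by ring
    have l2 : ((X : Polynomial ℝ) + 1) * X ^ n = X ^ (n+1) + X ^ n := by ring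
    simp only [l1, l2, map_add, hE']
    exact binomPoly_comp_succ n

/-- If `p(0) = p(−1) = 0`, `f = E(p)` and `f = x(x+1)g`, then
`E(p(x)² − p(x−1)p(x+1)) = (xg) ⋄ (xg) − g ⋄ (x²g)`,
where `f ⋄ h = E(E⁻¹(f)·E⁻¹(h))` is the diamond product. -/
theorem E_L_diamond (E : Polynomial ℝ ≃ₗ[ℝ] Polynomial ℝ)
    (hE : ∀ k : ℕ, E (binomPoly k) = Polynomial.X ^ k)
    (p : Polynomial ℝ) (hp0 : p.eval 0 = 0) (hpm1 : p.eval (-1) = 0)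
    (f g : Polynomial ℝ) (hf : f = E p)
    (hg : f = Polynomial.X * (Polynomial.X + 1) * g) :
    E (p ^ 2 - p.comp (Polynomial.X - 1) * p.comp (Polynomial.X + 1))
      = E (E.symm (Polynomial.X * g) * E.symm (Polynomial.X * g))
        - E (E.symm g * E.symm (Polynomial.X ^ 2 * g)) := by
  set α := E.symm g with hα
  set β := E.symm (X * g) with hβ
  set γ := E.symm (X ^ 2 * g) with hγ
  have hpf : E.symm f = p := by rw [hf, LinearEquiv.symm_apply_apply]
  -- p = γ.comp (X+1)
  have h1 : γ.comp (X + 1) = p := by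
    have := shift E hE (X * g)
    have e1 : X * (X * g) = X ^ 2 * g := by ring
    have e2 : (X + 1) * (X * g) = f := by rw [hg]; ring
    rw [e1, e2, hpf, ← hγ] at this
    exact this
  -- p.comp (X-1) = γ
  have h2 : p.comp (X - 1) = γ := by
    rw [← h1, Polynomial.comp_assoc]
    simp
  -- β.comp (X+1) = β + α
  have h4 : β.comp (X + 1) = β + α := by
    have := shift E hE g
    have e2 : (X + 1) * g = X * g + g := by ring
    rw [e2, map_add] at this
    rw [hβ, hα]; exact this
  -- γ + β = p
  have h5 : γ + β = p := by
    rw [hγ, hβ, ← map_add, ← hpf]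
    congr 1
    rw [hg]; ring
  rw [← map_sub]
  congr 1
  have hβp : β = p - γ := by linear_combination h5
  have hα' : α = p.comp (X + 1) - 2 * p + γ := by
    have := h4
    rw [hβp, sub_comp, h1] at this
    linear_combination -this
  rw [hβp, hα', ← h2]
  ring
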